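/- Variational expression for the two-parameter Rényi conditional entropy: for all α, β ∈ (0,∞), (α−1) · H̃_{α,β}(X|Y)_{P_XY} = min over probability distributions Q_XY on 𝒳×𝒴 that are absolutely continuous with respect to P_XY of ( (α(1−β)/β) · D(Q_Y‖P_Y) + α · D(Q_XY‖P_XY) + (α−1) · H(X|Y)_{Q_XY} ), where Q_Y is the marginal of Q_XY on 𝒴. -/

import Mathlib

open scoped BigOperators

noncomputable section

variable {𝓧 𝓨 : Type*} [Fintype 𝓧] [Fintype 𝓨]

/-- Marginal distribution of the second component. -/
def pY (P : 𝓧 × 𝓨 → ℝ) (y : 𝓨) : ℝ := ∑ x, P (x, y)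

/-- Conditional distribution `P_{X|Y}(x|y)`. -/
def pCond (P : 𝓧 × 𝓨 → ℝ) (x : 𝓧) (y : 𝓨) : ℝ := P (x, y) / pY P y

/-- Two-parameter Rényi conditional entropy `H̃_{α,β}(X|Y)` for `α ≠ 1`. -/
def Htilde (P : 𝓧 × 𝓨 → ℝ) (α β : ℝ) : ℝ :=
  α / (β * (1 - α)) *
    Real.logb 2 (∑ y, if 0 < pY P y then
      pY P y * (∑ x, pCond P x y ^ α) ^ (β / α) else 0)

/-- Shannon conditional entropy `H(X|Y)`. -/
def shannonCond (P : 𝓧 × 𝓨 → ℝ) : ℝ :=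
  -∑ p, if 0 < P p then P p * Real.logb 2 (pCond P p.1 p.2) else 0

/-- Two-parameter Rényi conditional entropy, continuously extended at `α = 1`. -/
def HtildeE (P : 𝓧 × 𝓨 → ℝ) (α β : ℝ) : ℝ :=
  if α = 1 then shannonCond P else Htilde P α β

/-- Relative entropy `D(Q‖P)` (for `Q` absolutely continuous w.r.t. `P`). -/
def relEnt {𝓩 : Type*} [Fintype 𝓩] (Q P : 𝓩 → ℝ) : ℝ :=
  ∑ z, if 0 < Q z then Q z * Real.logb 2 (Q z / P z) else 0

/-!
Write `A(y) = ∑ₓ P(x|y)^α`, `Z = ∑_y P(y) A(y)^{β/α}`, and let `Q*` be the tilted distribution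
with marginal `S(y) = P(y) A(y)^{β/α} / Z` and conditional `r(x|y) = P(x|y)^α / A(y)`.
Expanding the logarithms, the objective splits as
`-(α/β) log Z + (α/β) D(Q_Y‖S) + D(Q_XY‖Q_Y · r)`,
so by Gibbs' inequality it is at least `-(α/β) log Z = (α-1) H̃_{α,β}(X|Y)`, with equality at `Q*`.
-/

open Finset Real

section Gibbs

variable {𝓩 : Type*} [Fintype 𝓩]

lemma ite_pos_mul_of_nonneg {a : ℝ} (ha : 0 ≤ a) (b : ℝ) :
    (if 0 < a then a * b else 0) = a * b := by
  rcases ha.lt_or_eq with h | h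
  · rw [if_pos h]
  · rw [if_neg h.not_lt, ← h, zero_mul]

lemma relEnt_eq_sum {q : 𝓩 → ℝ} (hq : ∀ z, 0 ≤ q z) (w : 𝓩 → ℝ) :
    relEnt q w = ∑ z, q z * logb 2 (q z / w z) :=
  sum_congr rfl fun z _ => ite_pos_mul_of_nonneg (hq z) _

lemma relEnt_self (q : 𝓩 → ℝ) : relEnt q q = 0 :=
  sum_eq_zero fun z _ => by
    split_ifs with h
    · rw [div_self h.ne', logb_one, mul_zero]
    · rfl

lemma sub_div_log_two_le_mul_logb {q w : ℝ} (hq : 0 ≤ q) (hw : 0 ≤ w) (hqw : 0 < q → 0 < w) :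
    (q - w) / log 2 ≤ q * logb 2 (q / w) := by
  have hlog2 : 0 < log 2 := log_pos one_lt_two
  rcases hq.lt_or_eq with hq | rfl
  · have hw := hqw hq
    have := log_le_sub_one_of_pos (div_pos hw hq)
    rw [logb, ← mul_div_assoc, div_le_div_iff_of_pos_right hlog2, ← neg_le_neg_iff,
      ← mul_neg, ← log_inv, inv_div]
    calc -(q - w) = q * (w / q - 1) := by field_simp; ring
      _ ≥ q * log (w / q) := by gcongr
  · rw [zero_sub, neg_div, zero_mul, neg_nonpos]
    exact div_nonneg hw hlog2.le

lemma relEnt_nonneg {q w : 𝓩 → ℝ} (hq : ∀ z, 0 ≤ q z) (hq1 : ∑ z, q z = 1)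
    (hw : ∀ z, 0 ≤ w z) (hw1 : ∑ z, w z ≤ 1) (hqw : ∀ z, 0 < q z → 0 < w z) :
    0 ≤ relEnt q w := by
  rw [relEnt_eq_sum hq]
  calc 0 ≤ (∑ z, q z - ∑ z, w z) / log 2 := div_nonneg (by linarith) (log_pos one_lt_two).le
    _ = ∑ z, (q z - w z) / log 2 := by rw [← sum_sub_distrib, sum_div]
    _ ≤ _ := sum_le_sum fun z _ => sub_div_log_two_le_mul_logb (hq z) (hw z) (hqw z)

end Gibbs

section Marginal

variable {P Q : 𝓧 × 𝓨 → ℝ}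

omit [Fintype 𝓨] in
lemma pY_nonneg (hP : ∀ p, 0 ≤ P p) (y : 𝓨) : 0 ≤ pY P y :=
  sum_nonneg fun x _ => hP (x, y)

lemma sum_pY (P : 𝓧 × 𝓨 → ℝ) : ∑ y, pY P y = ∑ p, P p :=
  (Fintype.sum_prod_type_right P).symm

lemma sum_pY_mul (Q : 𝓧 × 𝓨 → ℝ) (c : 𝓨 → ℝ) : ∑ y, pY Q y * c y = ∑ p, Q p * c p.2 := by
  simp only [pY, sum_mul]
  exact (Fintype.sum_prod_type_right fun p => Q p * c p.2).symm

omit [Fintype 𝓨] in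
lemma le_pY (hP : ∀ p, 0 ≤ P p) (p : 𝓧 × 𝓨) : P p ≤ pY P p.2 :=
  single_le_sum (f := fun x => P (x, p.2)) (fun x _ => hP (x, p.2)) (mem_univ p.1)

omit [Fintype 𝓨] in
lemma pY_pos_of_pos (hP : ∀ p, 0 ≤ P p) {p : 𝓧 × 𝓨} (hp : 0 < P p) : 0 < pY P p.2 :=
  hp.trans_le (le_pY hP p)

omit [Fintype 𝓨] in
lemma exists_pos_of_pY_pos {y : 𝓨} (hy : 0 < pY P y) : ∃ x, 0 < P (x, y) := by
  obtain ⟨x, -, hx⟩ := exists_lt_of_sum_lt (s := univ) (f := 0) (g := fun x => P (x, y))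
    (by simpa [pY] using hy)
  exact ⟨x, hx⟩

omit [Fintype 𝓧] [Fintype 𝓨] in
lemma pos_of_absCont (hP : ∀ p, 0 ≤ P p) (hQP : ∀ p, P p = 0 → Q p = 0) {p : 𝓧 × 𝓨}
    (hp : 0 < Q p) : 0 < P p :=
  (hP p).lt_of_ne fun h => hp.ne' (hQP p h.symm)

omit [Fintype 𝓨] in
lemma pY_pos_of_absCont (hP : ∀ p, 0 ≤ P p) (hQP : ∀ p, P p = 0 → Q p = 0) {y : 𝓨}
    (hy : 0 < pY Q y) : 0 < pY P y :=
  have ⟨_, hx⟩ := exists_pos_of_pY_pos hy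
  pY_pos_of_pos hP (pos_of_absCont hP hQP hx)

omit [Fintype 𝓨] in
lemma pCond_nonneg (hP : ∀ p, 0 ≤ P p) (x : 𝓧) (y : 𝓨) : 0 ≤ pCond P x y :=
  div_nonneg (hP (x, y)) (pY_nonneg hP y)

lemma shannonCond_eq_sum (hQ : ∀ p, 0 ≤ Q p) :
    shannonCond Q = -∑ p, Q p * logb 2 (pCond Q p.1 p.2) := by
  rw [shannonCond]
  congr 1
  exact sum_congr rfl fun p _ => ite_pos_mul_of_nonneg (hQ p) _

def jointOf (m : 𝓨 → ℝ) (k : 𝓧 → 𝓨 → ℝ) : 𝓧 × 𝓨 → ℝ := fun p => m p.2 * k p.1 p.2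

omit [Fintype 𝓨] in
lemma pY_jointOf {m : 𝓨 → ℝ} {k : 𝓧 → 𝓨 → ℝ} (hk : ∀ y, m y ≠ 0 → ∑ x, k x y = 1) :
    pY (jointOf m k) = m := by
  ext y
  simp only [pY, jointOf, ← mul_sum]
  by_cases hy : m y = 0
  · rw [hy, zero_mul]
  · rw [hk y hy, mul_one]

lemma sum_jointOf {m : 𝓨 → ℝ} {k : 𝓧 → 𝓨 → ℝ} (hk : ∀ y, m y ≠ 0 → ∑ x, k x y = 1) :
    ∑ p, jointOf m k p = ∑ y, m y := by
  rw [← sum_pY, pY_jointOf hk]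

end Marginal

section Tilt

variable {P Q : 𝓧 × 𝓨 → ℝ} {α β : ℝ}

def condPowSum (P : 𝓧 × 𝓨 → ℝ) (α : ℝ) (y : 𝓨) : ℝ := ∑ x, pCond P x y ^ α

def tiltNorm (P : 𝓧 × 𝓨 → ℝ) (α β : ℝ) : ℝ := ∑ y, pY P y * condPowSum P α y ^ (β / α)

def tiltMarg (P : 𝓧 × 𝓨 → ℝ) (α β : ℝ) (y : 𝓨) : ℝ :=
  pY P y * condPowSum P α y ^ (β / α) / tiltNorm P α β

def tiltCond (P : 𝓧 × 𝓨 → ℝ) (α : ℝ) (x : 𝓧) (y : 𝓨) : ℝ := pCond P x y ^ α / condPowSum P α y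

def tilt (P : 𝓧 × 𝓨 → ℝ) (α β : ℝ) : 𝓧 × 𝓨 → ℝ := jointOf (tiltMarg P α β) (tiltCond P α)

omit [Fintype 𝓨] in
lemma condPowSum_nonneg (hP : ∀ p, 0 ≤ P p) (y : 𝓨) : 0 ≤ condPowSum P α y :=
  sum_nonneg fun x _ => rpow_nonneg (pCond_nonneg hP x y) α

omit [Fintype 𝓨] in
lemma condPowSum_pos (hP : ∀ p, 0 ≤ P p) {y : 𝓨} (hy : 0 < pY P y) : 0 < condPowSum P α y := by
  obtain ⟨x, hx⟩ := exists_pos_of_pY_pos hy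
  calc 0 < pCond P x y ^ α := rpow_pos_of_pos (div_pos hx hy) α
    _ ≤ condPowSum P α y := single_le_sum (f := fun x => pCond P x y ^ α)
        (fun x _ => rpow_nonneg (pCond_nonneg hP x y) α) (mem_univ x)

omit [Fintype 𝓨] in
lemma condPowSum_one {y : 𝓨} (hy : pY P y ≠ 0) : condPowSum P 1 y = 1 := by
  simp only [condPowSum, rpow_one, pCond, ← sum_div]
  exact div_self hy

lemma tiltNorm_pos (hP : ∀ p, 0 ≤ P p) (hPsum : ∑ p, P p = 1) : 0 < tiltNorm P α β := by
  obtain ⟨y, -, hy⟩ : ∃ y ∈ univ, (0 : ℝ) < pY P y :=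
    exists_lt_of_sum_lt (f := 0) (by simp [sum_pY, hPsum])
  exact sum_pos' (fun y _ => mul_nonneg (pY_nonneg hP y) (rpow_nonneg (condPowSum_nonneg hP y) _))
    ⟨y, mem_univ y, mul_pos hy (rpow_pos_of_pos (condPowSum_pos hP hy) _)⟩

lemma tiltNorm_one (hPsum : ∑ p, P p = 1) : tiltNorm P 1 β = 1 := by
  rw [tiltNorm, div_one]
  calc ∑ y, pY P y * condPowSum P 1 y ^ β = ∑ y, pY P y := sum_congr rfl fun y _ => ?_
    _ = 1 := by rw [sum_pY, hPsum]
  by_cases hy : pY P y = 0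
  · rw [hy, zero_mul]
  · rw [condPowSum_one hy, one_rpow, mul_one]

lemma tiltMarg_nonneg (hP : ∀ p, 0 ≤ P p) (hPsum : ∑ p, P p = 1) (y : 𝓨) :
    0 ≤ tiltMarg P α β y :=
  div_nonneg (mul_nonneg (pY_nonneg hP y) (rpow_nonneg (condPowSum_nonneg hP y) _))
    (tiltNorm_pos hP hPsum).le

lemma tiltMarg_pos (hP : ∀ p, 0 ≤ P p) (hPsum : ∑ p, P p = 1) {y : 𝓨} (hy : 0 < pY P y) :
    0 < tiltMarg P α β y :=
  div_pos (mul_pos hy (rpow_pos_of_pos (condPowSum_pos hP hy) _)) (tiltNorm_pos hP hPsum)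

lemma sum_tiltMarg (hP : ∀ p, 0 ≤ P p) (hPsum : ∑ p, P p = 1) : ∑ y, tiltMarg P α β y = 1 := by
  simp only [tiltMarg, ← sum_div]
  exact div_self (tiltNorm_pos hP hPsum).ne'

omit [Fintype 𝓨] in
lemma tiltCond_nonneg (hP : ∀ p, 0 ≤ P p) (x : 𝓧) (y : 𝓨) : 0 ≤ tiltCond P α x y :=
  div_nonneg (rpow_nonneg (pCond_nonneg hP x y) α) (condPowSum_nonneg hP y)

omit [Fintype 𝓨] in
lemma tiltCond_pos (hP : ∀ p, 0 ≤ P p) {x : 𝓧} {y : 𝓨} (hxy : 0 < P (x, y)) :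
    0 < tiltCond P α x y :=
  have hy := pY_pos_of_pos hP hxy
  div_pos (rpow_pos_of_pos (div_pos hxy hy) α) (condPowSum_pos hP hy)

omit [Fintype 𝓨] in
lemma tiltCond_eq_zero (hα : α ≠ 0) {x : 𝓧} {y : 𝓨} (hxy : P (x, y) = 0) :
    tiltCond P α x y = 0 := by
  rw [tiltCond, pCond, hxy, zero_div, zero_rpow hα, zero_div]

omit [Fintype 𝓨] in
lemma sum_tiltCond (hP : ∀ p, 0 ≤ P p) {y : 𝓨} (hy : 0 < pY P y) : ∑ x, tiltCond P α x y = 1 := by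
  simp only [tiltCond, ← sum_div]
  exact div_self (condPowSum_pos hP hy).ne'

lemma pY_tilt (hP : ∀ p, 0 ≤ P p) : pY (tilt P α β) = tiltMarg P α β := by
  refine pY_jointOf fun y hy => sum_tiltCond hP ((pY_nonneg hP y).lt_of_ne' fun h => hy ?_)
  rw [tiltMarg, h, zero_mul, zero_div]

lemma tilt_nonneg (hP : ∀ p, 0 ≤ P p) (hPsum : ∑ p, P p = 1) (p : 𝓧 × 𝓨) :
    0 ≤ tilt P α β p :=
  mul_nonneg (tiltMarg_nonneg hP hPsum p.2) (tiltCond_nonneg hP p.1 p.2)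

lemma sum_tilt (hP : ∀ p, 0 ≤ P p) (hPsum : ∑ p, P p = 1) : ∑ p, tilt P α β p = 1 := by
  rw [← sum_pY, pY_tilt hP, sum_tiltMarg hP hPsum]

lemma tilt_eq_zero (hα : α ≠ 0) {p : 𝓧 × 𝓨} (hp : P p = 0) : tilt P α β p = 0 :=
  mul_eq_zero_of_right _ (tiltCond_eq_zero hα hp)

end Tilt

lemma logb_objective_split {q qy p py A Z α β : ℝ} (hq : 0 < q) (hqy : 0 < qy) (hp : 0 < p)
    (hpy : 0 < py) (hA : 0 < A) (hZ : 0 < Z) (hα : α ≠ 0) (hβ : β ≠ 0) :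
    α * (1 - β) / β * logb 2 (qy / py) + α * logb 2 (q / p) - (α - 1) * logb 2 (q / qy)
      = -(α / β) * logb 2 Z + α / β * logb 2 (qy / (py * A ^ (β / α) / Z))
        + logb 2 (q / (qy * ((p / py) ^ α / A))) := by
  simp (disch := positivity) only [logb_div, logb_mul, logb_rpow_eq_mul_logb_of_pos]
  field_simp
  ring

section Objective

variable {P Q : 𝓧 × 𝓨 → ℝ} {α β : ℝ}

def variationalObjective (P Q : 𝓧 × 𝓨 → ℝ) (α β : ℝ) : ℝ :=
  α * (1 - β) / β * relEnt (pY Q) (pY P) + α * relEnt Q P + (α - 1) * shannonCond Q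

lemma variationalObjective_eq (hP : ∀ p, 0 ≤ P p) (hPsum : ∑ p, P p = 1) (hα : α ≠ 0)
    (hβ : β ≠ 0) (hQ : ∀ p, 0 ≤ Q p) (hQsum : ∑ p, Q p = 1) (hQP : ∀ p, P p = 0 → Q p = 0) :
    variationalObjective P Q α β = -(α / β) * logb 2 (tiltNorm P α β)
      + α / β * relEnt (pY Q) (tiltMarg P α β) + relEnt Q (jointOf (pY Q) (tiltCond P α)) := by
  have hQY := pY_nonneg hQ
  rw [variationalObjective, relEnt_eq_sum hQY, relEnt_eq_sum hQY, relEnt_eq_sum hQ,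
    relEnt_eq_sum hQ, shannonCond_eq_sum hQ, sum_pY_mul, sum_pY_mul]
  have hconst (c : ℝ) : c = ∑ p, Q p * c := by rw [← sum_mul, hQsum, one_mul]
  rw [hconst (-(α / β) * logb 2 (tiltNorm P α β))]
  simp only [mul_neg, mul_sum, ← sum_neg_distrib, ← sum_add_distrib]
  refine sum_congr rfl fun p _ => ?_
  rcases (hQ p).eq_or_lt with h | h
  · rw [← h]; ring
  have hPp := pos_of_absCont hP hQP h
  have hpy := pY_pos_of_pos hP hPp
  have key := logb_objective_split h (pY_pos_of_pos hQ h) hPp hpy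
    (condPowSum_pos (α := α) hP hpy) (tiltNorm_pos (α := α) (β := β) hP hPsum) hα hβ
  simp only [pCond, tiltMarg, jointOf, tiltCond, Prod.mk.eta] at key ⊢
  linear_combination Q p * key

lemma variationalObjective_tilt (hP : ∀ p, 0 ≤ P p) (hPsum : ∑ p, P p = 1) (hα : α ≠ 0)
    (hβ : β ≠ 0) :
    variationalObjective P (tilt P α β) α β = -(α / β) * logb 2 (tiltNorm P α β) := by
  rw [variationalObjective_eq hP hPsum hα hβ (tilt_nonneg hP hPsum) (sum_tilt hP hPsum)
    (fun _ => tilt_eq_zero hα), pY_tilt hP, tilt, relEnt_self, relEnt_self, mul_zero, add_zero,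
    add_zero]

lemma neg_div_mul_logb_tiltNorm_le (hP : ∀ p, 0 ≤ P p) (hPsum : ∑ p, P p = 1) (hα : 0 < α)
    (hβ : 0 < β) (hQ : ∀ p, 0 ≤ Q p) (hQsum : ∑ p, Q p = 1) (hQP : ∀ p, P p = 0 → Q p = 0) :
    -(α / β) * logb 2 (tiltNorm P α β) ≤ variationalObjective P Q α β := by
  rw [variationalObjective_eq hP hPsum hα.ne' hβ.ne' hQ hQsum hQP]
  have hQY : ∑ y, pY Q y = 1 := by rw [sum_pY, hQsum]
  have hsupp (y : 𝓨) (hy : pY Q y ≠ 0) : 0 < pY P y :=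
    pY_pos_of_absCont hP hQP ((pY_nonneg hQ y).lt_of_ne' hy)
  have hmarg : 0 ≤ relEnt (pY Q) (tiltMarg P α β) :=
    relEnt_nonneg (pY_nonneg hQ) hQY (tiltMarg_nonneg hP hPsum) (sum_tiltMarg hP hPsum).le
      fun y hy => tiltMarg_pos hP hPsum (hsupp y hy.ne')
  have hcond : 0 ≤ relEnt Q (jointOf (pY Q) (tiltCond P α)) :=
    relEnt_nonneg hQ hQsum (fun p => mul_nonneg (pY_nonneg hQ _) (tiltCond_nonneg hP _ _))
      (by rw [sum_jointOf fun y hy => sum_tiltCond hP (hsupp y hy), hQY])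
      fun p hp => mul_pos (pY_pos_of_pos hQ hp) (tiltCond_pos hP (pos_of_absCont hP hQP hp))
  linarith [mul_nonneg (div_pos hα hβ).le hmarg]

end Objective

lemma sub_one_mul_HtildeE {P : 𝓧 × 𝓨 → ℝ} (hP : ∀ p, 0 ≤ P p) (hPsum : ∑ p, P p = 1) {α β : ℝ}
    (hβ : β ≠ 0) : (α - 1) * HtildeE P α β = -(α / β) * logb 2 (tiltNorm P α β) := by
  rcases eq_or_ne α 1 with rfl | hα
  · rw [tiltNorm_one hPsum, logb_one, sub_self, zero_mul, mul_zero]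
  have hsum : (∑ y, if 0 < pY P y then pY P y * (∑ x, pCond P x y ^ α) ^ (β / α) else 0)
      = tiltNorm P α β :=
    sum_congr rfl fun y _ => ite_pos_mul_of_nonneg (pY_nonneg hP y) _
  rw [HtildeE, if_neg hα, Htilde, hsum]
  have : 1 - α ≠ 0 := sub_ne_zero.mpr hα.symm
  field_simp
  ring

theorem HtildeE_variational_general
    (P : 𝓧 × 𝓨 → ℝ) (hP : ∀ p, 0 ≤ P p) (hPsum : ∑ p, P p = 1)
    (α β : ℝ) (hα : 0 < α) (hβ : 0 < β) :
    IsLeast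
      { v : ℝ | ∃ Q : 𝓧 × 𝓨 → ℝ,
          (∀ p, 0 ≤ Q p) ∧ (∑ p, Q p = 1) ∧ (∀ p, P p = 0 → Q p = 0) ∧
          v = α * (1 - β) / β * relEnt (pY Q) (pY P) + α * relEnt Q P +
              (α - 1) * shannonCond Q }
      ((α - 1) * HtildeE P α β) := by
  rw [sub_one_mul_HtildeE hP hPsum hβ.ne']
  refine ⟨⟨tilt P α β, tilt_nonneg hP hPsum, sum_tilt hP hPsum, fun _ => tilt_eq_zero hα.ne',
    (variationalObjective_tilt hP hPsum hα.ne' hβ.ne').symm⟩, ?_⟩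
  rintro _ ⟨Q, hQ, hQsum, hQP, rfl⟩
  exact neg_div_mul_logb_tiltNorm_le hP hPsum hα hβ hQ hQsum hQP

/-- variational expression
`(α−1)·H̃_{α,β}(X|Y) = min_{Q_XY ≪ P_XY} ((α(1−β)/β)·D(Q_Y‖P_Y) + α·D(Q_XY‖P_XY)
  + (α−1)·H(X|Y)_{Q_XY})`. -/
theorem HtildeE_variational
    [Nonempty 𝓧] [Nonempty 𝓨]
    (P : 𝓧 × 𝓨 → ℝ) (hP : ∀ p, 0 ≤ P p) (hPsum : ∑ p, P p = 1)
    (α β : ℝ) (hα : 0 < α) (hβ : 0 < β) :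
    IsLeast
      { v : ℝ | ∃ Q : 𝓧 × 𝓨 → ℝ,
          (∀ p, 0 ≤ Q p) ∧ (∑ p, Q p = 1) ∧ (∀ p, P p = 0 → Q p = 0) ∧
          v = α * (1 - β) / β * relEnt (pY Q) (pY P) + α * relEnt Q P +
              (α - 1) * shannonCond Q }
      ((α - 1) * HtildeE P α β) :=
  HtildeE_variational_general P hP hPsum α β hα hβ
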